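/- Let S be a finite set, and suppose B□ᵢC ≤ G and D□ⱼF ≤ G are strong shuffles in M̂ₙ(S) (so |B| ⊔ |C| = S = |D| ⊔ |F|, G−|C| = B, G−|B| = C, G−|F| = D, G−|D| = F), with i ≤ j. Set X₁ = D−|C|, X₂ = F−|C|, X₃ = D−|B|, X₄ = F−|B|. Then: (a) D−|C| = B−|F|, F−|C| = B−|D|, D−|B| = C−|F|, and F−|B| = C−|D|; (b) (X₁□ⱼX₂)□ᵢ(X₃□ⱼX₄) ≤ B□ᵢC and (X₁□ᵢX₃)□ⱼ(X₂□ᵢX₄) ≤ D□ⱼF in M̂ₙ(S); (c) if moreover i < j, then (X₁□ⱼX₂)□ᵢ(X₃□ⱼX₄) ≤ (X₁□ᵢX₃)□ⱼ(X₂□ᵢX₄), so the extended diagram can be completed into a commutative triangle. -/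

import Mathlib

/-- Formal `(n, Fin k)`-expressions: binary trees whose leaves are labeled by
generators and whose internal nodes are labeled by one of the `n` operations.
Expressions are considered up to the strict associativity of each operation,
via the relation `W.equiv` below. -/
inductive W (n k : ℕ) : Type
  | leaf : Fin k → W n k
  | node : Fin n → W n k → W n k → W n k

namespace W

variable {n k : ℕ}

/-- The list of leaf labels, from left to right. -/
def leaves : W n k → List (Fin k)
  | leaf a => [a]
  | node _ A B => A.leaves ++ B.leaves

/-- `A.Exact T`: the expression `A` uses each element of `T` exactly once and
no other generators. -/
def Exact (A : W n k) (T : Finset (Fin k)) : Prop :=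
  A.leaves.Nodup ∧ A.leaves.toFinset = T

/-- `A.inRel a b i` means `a □ᵢ b` in `A`: the lowest common "ancestor" node of the
leaves `a` and `b` carries the operation `i`, with `a` to the left of `b`. -/
def inRel : W n k → Fin k → Fin k → Fin n → Prop
  | leaf _, _, _, _ => False
  | node j A B, a, b, i => A.inRel a b i ∨ B.inRel a b i ∨ (j = i ∧ a ∈ A.leaves ∧ b ∈ B.leaves)

/-- The order relation of the poset `M̂ₙ`: `A ≤ B` iff whenever `a □ᵢ b` in `A`,
either `a □ⱼ b` in `B` for some `j ≥ i`, or `b □ⱼ a` in `B` for some `j > i`. -/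
def le (A B : W n k) : Prop :=
  ∀ a b : Fin k, a ≠ b → ∀ i : Fin n, A.inRel a b i →
    ∃ j : Fin n, (i ≤ j ∧ B.inRel a b j) ∨ (i < j ∧ B.inRel b a j)

/-- One step of the associativity/congruence relation on expressions. -/
inductive Step : W n k → W n k → Prop
  | assoc (i : Fin n) (A B C : W n k) :
      Step (node i (node i A B) C) (node i A (node i B C))
  | congr_left (i : Fin n) {A A' : W n k} (B : W n k) :
      Step A A' → Step (node i A B) (node i A' B)
  | congr_right (i : Fin n) (A : W n k) {B B' : W n k} :
      Step B B' → Step (node i A B) (node i A B')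

/-- Equality of expressions (strict associativity of each operation). -/
def equiv (A B : W n k) : Prop := Relation.EqvGen Step A B

/-- Restriction of an expression to the leaves satisfying `p`
(`none` if no leaf survives). -/
def restrict : W n k → (Fin k → Bool) → Option (W n k)
  | leaf a, p => if p a then some (leaf a) else none
  | node i A B, p =>
    match A.restrict p, B.restrict p with
    | some A', some B' => some (node i A' B')
    | some A', none => some A'
    | none, o => o

end W

/-- Joining two possibly-empty expressions by the operation `i`, with the convention
that the empty expression is a unit. -/
def onode {n k : ℕ} (i : Fin n) : Option (W n k) → Option (W n k) → Option (W n k)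
  | some A, some B => some (W.node i A B)
  | some A, none => some A
  | none, o => o

/-- Equality of possibly-empty expressions. -/
def OEquiv {n k : ℕ} : Option (W n k) → Option (W n k) → Prop
  | none, none => True
  | some A, some B => A.equiv B
  | _, _ => False

/-- `A − T`: the expression `A` with the leaves belonging to `T` deleted. -/
def diffR {n k : ℕ} (A : W n k) (T : Finset (Fin k)) : Option (W n k) :=
  A.restrict fun a => decide (a ∉ T)

/-!
Deleting leaves is compatible with everything in sight: it distributes over joins, two
deletions commute, and it respects associativity and `≤`. Hence (a): `D − |C|` and `B − |F|` are
both `G` with `|C| ∪ |F|` deleted, and so on. Deleting `|C|` from `D □ⱼ F ≤ G` gives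
`X₁ □ⱼ X₂ ≤ G − |C| = B`, and likewise `X₃ □ⱼ X₄ ≤ C`; deleting `|F|` from `B □ᵢ C ≤ G` and using
(a) gives `X₁ □ᵢ X₃ ≤ D`, and likewise `X₂ □ᵢ X₄ ≤ F`. Since joining is monotone, this gives (b);
the joins are nonempty because every leaf of `D` lies outside `|B|` or outside `|C|`. Part (c) is
the interchange law `(X₁ □ⱼ X₂) □ᵢ (X₃ □ⱼ X₄) ≤ (X₁ □ᵢ X₃) □ⱼ (X₂ □ᵢ X₄)` for `i < j`, valid for
arbitrary expressions: the pairs `X₁X₄` and `X₂X₃` move from `□ᵢ` to the stronger `□ⱼ`, all other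
pairs keep their operation.
-/

section

variable {n k : ℕ}

def oleaves : Option (W n k) → List (Fin k)
  | none => []
  | some A => A.leaves

def OInRel : Option (W n k) → Fin k → Fin k → Fin n → Prop
  | none, _, _, _ => False
  | some A, a, b, l => A.inRel a b l

def OLe (o o' : Option (W n k)) : Prop :=
  ∀ a b : Fin k, a ≠ b → ∀ l : Fin n, OInRel o a b l →
    ∃ m : Fin n, (l ≤ m ∧ OInRel o' a b m) ∨ (l < m ∧ OInRel o' b a m)

theorem onode_none_right (m : Fin n) (o : Option (W n k)) : onode m o none = o := by
  cases o <;> rfl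

theorem onode_eq_none_iff (m : Fin n) (o₁ o₂ : Option (W n k)) :
    onode m o₁ o₂ = none ↔ o₁ = none ∧ o₂ = none := by
  cases o₁ <;> cases o₂ <;> simp [onode]

theorem oleaves_onode (m : Fin n) (o₁ o₂ : Option (W n k)) :
    oleaves (onode m o₁ o₂) = oleaves o₁ ++ oleaves o₂ := by
  cases o₁ <;> cases o₂ <;> simp [onode, oleaves, W.leaves]

theorem oInRel_onode (m : Fin n) (o₁ o₂ : Option (W n k)) (a b : Fin k) (l : Fin n) :
    OInRel (onode m o₁ o₂) a b l ↔
      OInRel o₁ a b l ∨ OInRel o₂ a b l ∨ (m = l ∧ a ∈ oleaves o₁ ∧ b ∈ oleaves o₂) := by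
  cases o₁ <;> cases o₂ <;> simp [onode, OInRel, oleaves, W.inRel]

namespace W

theorem leaves_ne_nil (A : W n k) : A.leaves ≠ [] := by
  induction A with
  | leaf a => simp [leaves]
  | node i A B ihA ihB => simp [leaves, ihA]

theorem restrict_node (m : Fin n) (A B : W n k) (p : Fin k → Bool) :
    (node m A B).restrict p = onode m (A.restrict p) (B.restrict p) := by
  cases hA : A.restrict p <;> cases hB : B.restrict p <;> simp [restrict, onode, hA, hB]

theorem oleaves_restrict (A : W n k) (p : Fin k → Bool) :
    oleaves (A.restrict p) = A.leaves.filter p := by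
  induction A with
  | leaf a => by_cases h : p a <;> simp [restrict, oleaves, leaves, h]
  | node m A B ihA ihB =>
    rw [restrict_node, oleaves_onode, ihA, ihB, leaves, List.filter_append]

theorem oInRel_restrict (A : W n k) (p : Fin k → Bool) (a b : Fin k) (l : Fin n) :
    OInRel (A.restrict p) a b l ↔ A.inRel a b l ∧ p a ∧ p b := by
  induction A with
  | leaf c => by_cases hc : p c <;> simp [restrict, hc, OInRel, inRel]
  | node m A B ihA ihB =>
    rw [restrict_node, oInRel_onode, ihA, ihB, oleaves_restrict, oleaves_restrict]
    simp only [inRel, List.mem_filter]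
    tauto

theorem bind_restrict_onode (m : Fin n) (o₁ o₂ : Option (W n k)) (p : Fin k → Bool) :
    (onode m o₁ o₂).bind (restrict · p) =
      onode m (o₁.bind (restrict · p)) (o₂.bind (restrict · p)) := by
  cases o₁ <;> cases o₂
  all_goals first | rfl | exact restrict_node .. | exact (onode_none_right ..).symm

theorem bind_restrict_restrict (A : W n k) (p q : Fin k → Bool) :
    (A.restrict p).bind (restrict · q) = A.restrict fun a => p a && q a := by
  induction A with
  | leaf c => by_cases h : p c <;> by_cases h' : q c <;> simp [restrict, h, h']
  | node m A B ihA ihB => rw [restrict_node, bind_restrict_onode, ihA, ihB, restrict_node]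

theorem leaves_step {A B : W n k} (h : Step A B) : A.leaves = B.leaves := by
  induction h <;> simp_all [leaves, List.append_assoc]

theorem inRel_step {A B : W n k} (h : Step A B) (a b : Fin k) (l : Fin n) :
    A.inRel a b l ↔ B.inRel a b l := by
  induction h with
  | assoc m X Y Z => simp only [inRel, leaves, List.mem_append]; tauto
  | congr_left m Y hs ih => simp only [inRel, leaves_step hs, ih]
  | congr_right m X hs ih => simp only [inRel, leaves_step hs, ih]

theorem of_step_invariant {β : Type*} {R : β → β → Prop} (hR : Equivalence R) {f : W n k → β}
    (hf : ∀ A B, Step A B → R (f A) (f B)) {A B : W n k} (h : A.equiv B) : R (f A) (f B) :=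
  (hR.comap f).eqvGen_iff.mp (Relation.EqvGen.mono hf _ _ h)

theorem equiv.node_congr (m : Fin n) {A A' B B' : W n k} (hA : A.equiv A') (hB : B.equiv B') :
    (node m A B).equiv (node m A' B') :=
  Relation.EqvGen.trans _ _ _
    (of_step_invariant (Relation.EqvGen.is_equivalence _) (f := (node m · B))
      (fun _ _ hs => .rel _ _ (Step.congr_left m B hs)) hA)
    (of_step_invariant (Relation.EqvGen.is_equivalence _) (f := (node m A' ·))
      (fun _ _ hs => .rel _ _ (Step.congr_right m A' hs)) hB)

end W

namespace OEquiv

theorem refl (o : Option (W n k)) : OEquiv o o := by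
  cases o
  · trivial
  · exact Relation.EqvGen.refl _

theorem symm {o₁ o₂ : Option (W n k)} (h : OEquiv o₁ o₂) : OEquiv o₂ o₁ := by
  cases o₁ <;> cases o₂ <;> first | trivial | exact h.elim | exact Relation.EqvGen.symm _ _ h

theorem trans {o₁ o₂ o₃ : Option (W n k)} (h₁ : OEquiv o₁ o₂) (h₂ : OEquiv o₂ o₃) :
    OEquiv o₁ o₃ := by
  cases o₁ <;> cases o₂ <;> cases o₃ <;>
    first | trivial | exact h₁.elim | exact h₂.elim | exact Relation.EqvGen.trans _ _ _ h₁ h₂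

theorem equivalence : Equivalence (@OEquiv n k) := ⟨refl, symm, trans⟩

theorem onode_congr (m : Fin n) {o₁ o₁' o₂ o₂' : Option (W n k)}
    (h₁ : OEquiv o₁ o₁') (h₂ : OEquiv o₂ o₂') :
    OEquiv (onode m o₁ o₂) (onode m o₁' o₂') := by
  cases o₁ <;> cases o₁' <;> cases o₂ <;> cases o₂' <;>
    first
    | exact h₁.elim
    | exact h₂.elim
    | trivial
    | exact h₁
    | exact h₂
    | exact W.equiv.node_congr m h₁ h₂

theorem onode_assoc (m : Fin n) (o₁ o₂ o₃ : Option (W n k)) :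
    OEquiv (onode m (onode m o₁ o₂) o₃) (onode m o₁ (onode m o₂ o₃)) := by
  cases o₁ <;> cases o₂ <;> cases o₃ <;>
    first | exact refl _ | exact Relation.EqvGen.rel _ _ (W.Step.assoc m _ _ _)

end OEquiv

namespace W

theorem restrict_step {A B : W n k} (h : Step A B) (p : Fin k → Bool) :
    OEquiv (A.restrict p) (B.restrict p) := by
  induction h with
  | assoc m X Y Z =>
    simp only [restrict_node]
    exact OEquiv.onode_assoc m _ _ _
  | congr_left m Y hs ih =>
    simp only [restrict_node]
    exact OEquiv.onode_congr m ih (OEquiv.refl _)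
  | congr_right m X hs ih =>
    simp only [restrict_node]
    exact OEquiv.onode_congr m (OEquiv.refl _) ih

namespace equiv

theorem leaves_eq {A B : W n k} (h : A.equiv B) : A.leaves = B.leaves :=
  of_step_invariant eq_equivalence (fun _ _ => leaves_step) h

theorem inRel_iff {A B : W n k} (h : A.equiv B) (a b : Fin k) (l : Fin n) :
    A.inRel a b l ↔ B.inRel a b l :=
  of_step_invariant ⟨Iff.refl, Iff.symm, Iff.trans⟩ (fun _ _ hs => inRel_step hs a b l) h

theorem restrict {A B : W n k} (h : A.equiv B) (p : Fin k → Bool) :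
    OEquiv (A.restrict p) (B.restrict p) :=
  of_step_invariant OEquiv.equivalence (fun _ _ hs => restrict_step hs p) h

end equiv

end W

namespace OEquiv

theorem oleaves_eq {o o' : Option (W n k)} (h : OEquiv o o') : oleaves o = oleaves o' := by
  cases o <;> cases o' <;> first | rfl | exact h.elim | exact W.equiv.leaves_eq h

theorem oInRel_iff {o o' : Option (W n k)} (h : OEquiv o o') (a b : Fin k) (l : Fin n) :
    OInRel o a b l ↔ OInRel o' a b l := by
  cases o <;> cases o' <;> first | exact Iff.rfl | exact h.elim | exact W.equiv.inRel_iff h a b l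

theorem bind_restrict {o o' : Option (W n k)} (h : OEquiv o o') (p : Fin k → Bool) :
    OEquiv (o.bind (W.restrict · p)) (o'.bind (W.restrict · p)) := by
  cases o <;> cases o' <;> first | trivial | exact h.elim | exact W.equiv.restrict h p

theorem ole {o o' : Option (W n k)} (h : OEquiv o o') : OLe o o' :=
  fun a b _ l hab => ⟨l, .inl ⟨le_rfl, (h.oInRel_iff a b l).mp hab⟩⟩

end OEquiv

theorem OLe.trans {o₁ o₂ o₃ : Option (W n k)} (h₁₂ : OLe o₁ o₂) (h₂₃ : OLe o₂ o₃) :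
    OLe o₁ o₃ := by
  intro a b hab l h
  obtain ⟨m, ⟨hlm, h₂⟩ | ⟨hlm, h₂⟩⟩ := h₁₂ a b hab l h
  · obtain ⟨m', ⟨hmm', h₃⟩ | ⟨hmm', h₃⟩⟩ := h₂₃ a b hab m h₂
    · exact ⟨m', .inl ⟨hlm.trans hmm', h₃⟩⟩
    · exact ⟨m', .inr ⟨hlm.trans_lt hmm', h₃⟩⟩
  · obtain ⟨m', ⟨hmm', h₃⟩ | ⟨hmm', h₃⟩⟩ := h₂₃ b a hab.symm m h₂
    · exact ⟨m', .inr ⟨hlm.trans_le hmm', h₃⟩⟩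
    · exact ⟨m', .inl ⟨(hlm.trans hmm').le, h₃⟩⟩

theorem OLe.exists_eq_some_le {o : Option (W n k)} {A : W n k} (h : OLe o (some A))
    (ho : o ≠ none) : ∃ Z, o = some Z ∧ Z.le A := by
  obtain ⟨Z, rfl⟩ := Option.ne_none_iff_exists'.mp ho
  exact ⟨Z, rfl, h⟩

theorem OLe.onode (m : Fin n) {x x' y y' : Option (W n k)} (hx : OLe x x') (hy : OLe y y')
    (hxl : oleaves x ⊆ oleaves x') (hyl : oleaves y ⊆ oleaves y') :
    OLe (onode m x y) (onode m x' y') := by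
  intro a b hab l h
  simp only [oInRel_onode] at h ⊢
  rcases h with h | h | ⟨rfl, ha, hb⟩
  · obtain ⟨m', h'⟩ := hx a b hab l h
    exact ⟨m', by tauto⟩
  · obtain ⟨m', h'⟩ := hy a b hab l h
    exact ⟨m', by tauto⟩
  · exact ⟨m, .inl ⟨le_rfl, .inr (.inr ⟨rfl, hxl ha, hyl hb⟩)⟩⟩

theorem ole_onode_interchange {i j : Fin n} (hij : i < j) (x₁ x₂ x₃ x₄ : Option (W n k)) :
    OLe (onode i (onode j x₁ x₂) (onode j x₃ x₄)) (onode j (onode i x₁ x₃) (onode i x₂ x₄)) := by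
  intro a b _ l h
  simp only [oInRel_onode, oleaves_onode, List.mem_append] at h ⊢
  rcases h with (h | h | ⟨rfl, ha, hb⟩) | (h | h | ⟨rfl, ha, hb⟩) | ⟨rfl, ha | ha, hb | hb⟩
  all_goals first
    | exact ⟨_, .inl ⟨le_rfl, by tauto⟩⟩
    | exact ⟨j, .inl ⟨hij.le, by tauto⟩⟩
    | exact ⟨j, .inr ⟨hij, by tauto⟩⟩

theorem W.le.ole_restrict {A G : W n k} (h : A.le G) (p : Fin k → Bool) :
    OLe (A.restrict p) (G.restrict p) := by
  intro a b hab l hA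
  rw [W.oInRel_restrict] at hA
  obtain ⟨hA, hpa, hpb⟩ := hA
  obtain ⟨m, hm⟩ := h a b hab l hA
  refine ⟨m, ?_⟩
  simp only [W.oInRel_restrict]
  tauto

theorem diffR_node (m : Fin n) (A B : W n k) (T : Finset (Fin k)) :
    diffR (W.node m A B) T = onode m (diffR A T) (diffR B T) :=
  W.restrict_node m A B _

theorem oleaves_diffR_subset (A : W n k) (T : Finset (Fin k)) :
    oleaves (diffR A T) ⊆ A.leaves := by
  rw [diffR, W.oleaves_restrict]
  exact List.filter_subset_self _

theorem diffR_ne_none_of_mem {A : W n k} {T : Finset (Fin k)} {a : Fin k} (ha : a ∈ A.leaves)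
    (haT : a ∉ T) : diffR A T ≠ none := by
  intro h
  have : a ∈ oleaves (diffR A T) := by
    rw [diffR, W.oleaves_restrict, List.mem_filter]
    exact ⟨ha, decide_eq_true haT⟩
  rw [h] at this
  simp [oleaves] at this

theorem diffR_ne_none_or_diffR_ne_none {T U : Finset (Fin k)} (hTU : Disjoint T U) (A : W n k) :
    diffR A T ≠ none ∨ diffR A U ≠ none := by
  obtain ⟨a, ha⟩ := List.exists_mem_of_ne_nil _ A.leaves_ne_nil
  by_cases haT : a ∈ T
  · exact .inr (diffR_ne_none_of_mem ha (Finset.disjoint_left.mp hTU haT))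
  · exact .inl (diffR_ne_none_of_mem ha haT)

theorem diffR_oequiv_restrict {G A : W n k} {T : Finset (Fin k)}
    (hA : OEquiv (diffR G T) (some A)) (U : Finset (Fin k)) :
    OEquiv (diffR A U) (G.restrict fun a => decide (a ∉ T) && decide (a ∉ U)) := by
  have h := hA.symm.bind_restrict fun a => decide (a ∉ U)
  rwa [diffR, W.bind_restrict_restrict] at h

theorem diffR_oequiv_diffR {G A A' : W n k} {T U : Finset (Fin k)}
    (hA : OEquiv (diffR G T) (some A)) (hA' : OEquiv (diffR G U) (some A')) :
    OEquiv (diffR A U) (diffR A' T) := by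
  have h := (diffR_oequiv_restrict hA' T).symm
  simp only [Bool.and_comm (decide (_ ∉ U))] at h
  exact (diffR_oequiv_restrict hA U).trans h

theorem diffR_ole_of_le {A G B : W n k} {T : Finset (Fin k)} (hA : A.le G)
    (hG : OEquiv (diffR G T) (some B)) : OLe (diffR A T) (some B) :=
  (hA.ole_restrict _).trans hG.ole

theorem oleaves_onode_subset {x y : Option (W n k)} {A : W n k} {T U : Finset (Fin k)}
    (m : Fin n) (hx : OEquiv x (diffR A T)) (hy : OEquiv y (diffR A U)) :
    oleaves (onode m x y) ⊆ A.leaves := by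
  rw [oleaves_onode, hx.oleaves_eq, hy.oleaves_eq]
  exact List.append_subset.mpr ⟨oleaves_diffR_subset A T, oleaves_diffR_subset A U⟩

end

theorem extending_diagram_general (n k : ℕ) (i j : Fin n)
    (SB SC SD SF : Finset (Fin k)) (B C D F G : W n k)
    (hBC : Disjoint SB SC)
    (hφ : (W.node i B C).le G) (hψ : (W.node j D F).le G)
    (hφ₁ : OEquiv (diffR G SC) (some B)) (hφ₂ : OEquiv (diffR G SB) (some C))
    (hψ₁ : OEquiv (diffR G SF) (some D)) (hψ₂ : OEquiv (diffR G SD) (some F)) :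
    (OEquiv (diffR D SC) (diffR B SF) ∧ OEquiv (diffR F SC) (diffR B SD) ∧
     OEquiv (diffR D SB) (diffR C SF) ∧ OEquiv (diffR F SB) (diffR C SD)) ∧
    (∃ Z : W n k,
      onode i (onode j (diffR D SC) (diffR F SC)) (onode j (diffR D SB) (diffR F SB))
        = some Z ∧ Z.le (W.node i B C)) ∧
    (∃ Z' : W n k,
      onode j (onode i (diffR D SC) (diffR D SB)) (onode i (diffR F SC) (diffR F SB))
        = some Z' ∧ Z'.le (W.node j D F)) ∧
    (i < j → ∀ Z Z' : W n k,
      onode i (onode j (diffR D SC) (diffR F SC)) (onode j (diffR D SB) (diffR F SB))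
        = some Z →
      onode j (onode i (diffR D SC) (diffR D SB)) (onode i (diffR F SC) (diffR F SB))
        = some Z' →
      Z.le Z') := by
  have eDC := diffR_oequiv_diffR hψ₁ hφ₁
  have eFC := diffR_oequiv_diffR hψ₂ hφ₁
  have eDB := diffR_oequiv_diffR hψ₁ hφ₂
  have eFB := diffR_oequiv_diffR hψ₂ hφ₂
  have leB : OLe (onode j (diffR D SC) (diffR F SC)) (some B) :=
    diffR_node j D F SC ▸ diffR_ole_of_le hψ hφ₁
  have leC : OLe (onode j (diffR D SB) (diffR F SB)) (some C) :=
    diffR_node j D F SB ▸ diffR_ole_of_le hψ hφ₂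
  have leD : OLe (onode i (diffR D SC) (diffR D SB)) (some D) :=
    (eDC.onode_congr i eDB).ole.trans (diffR_node i B C SF ▸ diffR_ole_of_le hφ hψ₁)
  have leF : OLe (onode i (diffR F SC) (diffR F SB)) (some F) :=
    (eFC.onode_congr i eFB).ole.trans (diffR_node i B C SD ▸ diffR_ole_of_le hφ hψ₂)
  have hne := diffR_ne_none_or_diffR_ne_none hBC D
  refine ⟨⟨eDC, eFC, eDB, eFB⟩, ?_, ?_, fun hij Z Z' hZ hZ' => ?_⟩
  · refine (leB.onode i leC (oleaves_onode_subset j eDC eFC)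
      (oleaves_onode_subset j eDB eFB)).exists_eq_some_le ?_
    simp only [ne_eq, onode_eq_none_iff] at hne ⊢
    tauto
  · refine (leD.onode j leF (oleaves_onode_subset i (.refl _) (.refl _))
      (oleaves_onode_subset i (.refl _) (.refl _))).exists_eq_some_le ?_
    simp only [ne_eq, onode_eq_none_iff] at hne ⊢
    tauto
  · have h := ole_onode_interchange hij (diffR D SC) (diffR F SC) (diffR D SB) (diffR F SB)
    rw [hZ, hZ'] at h
    exact h

/-- STATEMENT 15: given two strong shuffles `B □ᵢ C ≤ G` and `D □ⱼ F ≤ G`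
(with `i ≤ j`), setting `X₁ = D−|C|`, `X₂ = F−|C|`, `X₃ = D−|B|`, `X₄ = F−|B|`:
(a) the four difference identities hold;
(b) `(X₁□ⱼX₂)□ᵢ(X₃□ⱼX₄) ≤ B□ᵢC` and `(X₁□ᵢX₃)□ⱼ(X₂□ᵢX₄) ≤ D□ⱼF`;
(c) if `i < j`, the extended diagram closes to a commutative triangle:
    `(X₁□ⱼX₂)□ᵢ(X₃□ⱼX₄) ≤ (X₁□ᵢX₃)□ⱼ(X₂□ᵢX₄)`. -/
theorem extending_diagram (n k : ℕ) (hn : 1 ≤ n) (i j : Fin n) (hij : i ≤ j)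
    (S SB SC SD SF : Finset (Fin k)) (B C D F G : W n k)
    (hB : B.Exact SB) (hC : C.Exact SC) (hD : D.Exact SD) (hF : F.Exact SF)
    (hG : G.Exact S)
    (hBC : Disjoint SB SC) (hBCu : SB ∪ SC = S)
    (hDF : Disjoint SD SF) (hDFu : SD ∪ SF = S)
    (hφ : (W.node i B C).le G) (hψ : (W.node j D F).le G)
    (hφ₁ : OEquiv (diffR G SC) (some B)) (hφ₂ : OEquiv (diffR G SB) (some C))
    (hψ₁ : OEquiv (diffR G SF) (some D)) (hψ₂ : OEquiv (diffR G SD) (some F)) :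
    (OEquiv (diffR D SC) (diffR B SF) ∧ OEquiv (diffR F SC) (diffR B SD) ∧
     OEquiv (diffR D SB) (diffR C SF) ∧ OEquiv (diffR F SB) (diffR C SD)) ∧
    (∃ Z : W n k,
      onode i (onode j (diffR D SC) (diffR F SC)) (onode j (diffR D SB) (diffR F SB))
        = some Z ∧ Z.le (W.node i B C)) ∧
    (∃ Z' : W n k,
      onode j (onode i (diffR D SC) (diffR D SB)) (onode i (diffR F SC) (diffR F SB))
        = some Z' ∧ Z'.le (W.node j D F)) ∧
    (i < j → ∀ Z Z' : W n k,
      onode i (onode j (diffR D SC) (diffR F SC)) (onode j (diffR D SB) (diffR F SB))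
        = some Z →
      onode j (onode i (diffR D SC) (diffR D SB)) (onode i (diffR F SC) (diffR F SB))
        = some Z' →
      Z.le Z') :=
  extending_diagram_general n k i j SB SC SD SF B C D F G hBC hφ hψ hφ₁ hφ₂ hψ₁ hψ₂
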